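/- arXiv:1612.06213 — 2 statements merged into one kernel-verified Lean document; each statement's English description precedes it below -/
import Mathlib

section
/- Let t ∈ {0,…,97} and suppose that p_{5,2}(98n+t) is even for every nonnegative integer n. Then t ∈ {6, 13, 20, 27, 34, 48, 55, 62, 76, 90, 97}. -/
open scoped BigOperators

noncomputable section

/-- `e(w) = exp(2πiw)`. -/
def eC (w : ℂ) : ℂ := Complex.exp (2 * Real.pi * Complex.I * w)

/-- The second Bernoulli function `P₂(x) = {x}² - {x} + 1/6`. -/
def B2 (x : ℚ) : ℚ := Int.fract x ^ 2 - Int.fract x + 1 / 6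

/-- `P(r) = (1/2) ∑_{δ∣N} ∑_{0 ≤ g < δ} δ · r_{δ,g} · P₂(g/δ)`. -/
def Pr (N : ℕ) (r : ℕ → ℕ → ℚ) : ℚ :=
  (1 / 2) * ∑ δ ∈ N.divisors, ∑ g ∈ Finset.range δ, (δ : ℚ) * r δ g * B2 ((g : ℚ) / (δ : ℚ))

/-- The twisted tuple `r_a`, with `(r_a)_{δ,g} = r_{δ, (a·g mod δ)}`. -/
def rA (r : ℕ → ℕ → ℚ) (a : ℤ) : ℕ → ℕ → ℚ :=
  fun δ g => r δ ((a * g % (δ : ℤ)).toNat)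

/-- Congruence of rationals modulo a positive integer `m`: `(x - y)/m ∈ ℤ`. -/
def ratCong (m : ℕ) (x y : ℚ) : Prop := ∃ z : ℤ, x - y = (m : ℚ) * z

/-- Integer powers of a formal power series (with constant term `1`, so that
the inverse `PowerSeries.invOfUnit f 1` is the genuine inverse). -/
def zpowPS (f : PowerSeries ℤ) (k : ℤ) : PowerSeries ℤ :=
  if 0 ≤ k then f ^ k.toNat else PowerSeries.invOfUnit f 1 ^ (-k).toNat

/-- The single product `∏_{m>0, m ≡ g (mod δ)} (1 - q^m)` as a formal power series:
its `n`-th coefficient is the `n`-th coefficient of the (finite) product over `1 ≤ m ≤ n`. -/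
def singlePS (δ g : ℕ) : PowerSeries ℤ :=
  PowerSeries.mk fun n =>
    PowerSeries.coeff (R := ℤ) n
      (∏ m ∈ Finset.Icc 1 n, if m % δ = g % δ then 1 - PowerSeries.X ^ m else 1)

/-- `F_{δ,g}(q) = ∏_{m>0, m ≡ g (δ)} (1-q^m) · ∏_{m>0, m ≡ -g (δ)} (1-q^m)`
as a formal power series. -/
def FPS (δ g : ℕ) : PowerSeries ℤ :=
  PowerSeries.mk fun n =>
    PowerSeries.coeff (R := ℤ) n
      (∏ m ∈ Finset.Icc 1 n,
        (if m % δ = g % δ then 1 - PowerSeries.X ^ m else 1) *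
          (if m % δ = (δ - g) % δ then 1 - PowerSeries.X ^ m else 1))

/-- The Fourier coefficients `c_r(n)`, defined by
`∑ c_r(n) qⁿ = ∏_{δ∣N} ∏_{g<δ} F_{δ,g}(q)^{r_{δ,g}}`, where for `g = 0` or `2g = δ` the factor
`F_{δ,g}^{r_{δ,g}}` means the single product `singlePS δ g` raised to the integer `2·r_{δ,g}`. -/
def genC (N : ℕ) (r : ℕ → ℕ → ℚ) (n : ℕ) : ℤ :=
  PowerSeries.coeff (R := ℤ) n
    (∏ δ ∈ N.divisors, ∏ g ∈ Finset.range δ,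
      if g = 0 ∨ 2 * g = δ then zpowPS (singlePS δ g) (2 * r δ g).num
      else zpowPS (FPS δ g) (r δ g).num)

/-- The single product `∏_{m>0, m ≡ g (mod δ)} (1 - e(mz))` as a function on `ℂ`. -/
def singleC (δ g : ℕ) (z : ℂ) : ℂ :=
  ∏' m : ℕ, if (m + 1) % δ = g % δ then 1 - eC (((m : ℂ) + 1) * z) else 1

/-- `F_{δ,g}(z) = ∏_{m>0, m ≡ g (δ)} (1-e(mz)) · ∏_{m>0, m ≡ -g (δ)} (1-e(mz))`. -/
def FC (δ g : ℕ) (z : ℂ) : ℂ := singleC δ g z * singleC δ ((δ - g) % δ) z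

/-- The generalized eta-function `η_{δ,g}(z) = e(δ P₂(g/δ) z / 2) · F_{δ,g}(z)`. -/
def etaGen (δ g : ℕ) (z : ℂ) : ℂ :=
  eC ((δ : ℂ) * ((B2 ((g : ℚ) / (δ : ℚ)) : ℚ) : ℂ) * z / 2) * FC δ g z

/-- The generalized eta-quotient `H_r(z) = e(P(r) z) ∏_{δ∣N} ∏_{g<δ} F_{δ,g}(z)^{r_{δ,g}}`,
with the convention that for `g = 0` or `2g = δ` the factor is the single product raised to
the integer power `2·r_{δ,g}`. -/
def HrC (N : ℕ) (r : ℕ → ℕ → ℚ) (z : ℂ) : ℂ :=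
  eC (((Pr N r : ℚ) : ℂ) * z) *
    ∏ δ ∈ N.divisors, ∏ g ∈ Finset.range δ,
      if g = 0 ∨ 2 * g = δ then singleC δ g z ^ (2 * r δ g).num
      else FC δ g z ^ (r δ g).num

/-- `H_{r,m,t}(z) = (1/m) ∑_{λ mod m} e(-λ(t+P(r))/m) H_r((z+λ)/m)`. -/
def HrmtC (N : ℕ) (r : ℕ → ℕ → ℚ) (m t : ℕ) (z : ℂ) : ℂ :=
  (1 / (m : ℂ)) * ∑ l ∈ Finset.range m,
    eC (-(l : ℂ) * (((t : ℚ) + Pr N r : ℚ) : ℂ) / (m : ℂ)) * HrC N r ((z + (l : ℂ)) / (m : ℂ))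

/-- `p(n)`, the number of partitions of `n`. -/
def partCount (n : ℕ) : ℕ := Nat.card (Nat.Partition n)

/-- `p_{6,1}(n)`, the number of partitions of `n` with all parts `≡ ±1 (mod 6)`. -/
def p61 (n : ℕ) : ℕ := Nat.card {P : Nat.Partition n // ∀ x ∈ P.parts, x % 6 = 1 ∨ x % 6 = 5}

/-- `p_{5,1}(n)`, the number of partitions of `n` with all parts `≡ ±1 (mod 5)`. -/
def p51 (n : ℕ) : ℕ := Nat.card {P : Nat.Partition n // ∀ x ∈ P.parts, x % 5 = 1 ∨ x % 5 = 4}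

/-- `p_{5,2}(n)`, the number of partitions of `n` with all parts `≡ ±2 (mod 5)`. -/
def p52 (n : ℕ) : ℕ := Nat.card {P : Nat.Partition n // ∀ x ∈ P.parts, x % 5 = 2 ∨ x % 5 = 3}

/-!
Only finitely many values are needed: for every residue `t < 98` outside the list there is some
`n < 6` with `p_{5,2}(98n + t)` odd. The parities of `p_{5,2}(m)` for `m ≤ 587` are computed in
`𝔽₂[[q]] / (q^588)` from the product `∏ 1/(1 - q^p)` over the parts `p ≡ 2, 3 (mod 5)`, one
factor at a time, which matches the recurrence obtained by splitting off one part `p`.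
-/

namespace Nat.Partition

open Finset

theorem restricted_congr {n : ℕ} {s t : ℕ → Prop} [DecidablePred s] [DecidablePred t]
    (h : ∀ i, 0 < i → i ≤ n → (s i ↔ t i)) : restricted n s = restricted n t := by
  ext P
  simp only [restricted, mem_filter, mem_univ, true_and]
  exact forall₂_congr fun i hi => h i (P.parts_pos hi) (le_of_mem_parts hi)

theorem card_restricted_mem_nil (n : ℕ) :
    #(restricted n (· ∈ ([] : List ℕ))) = if n = 0 then 1 else 0 := by
  split_ifs with hn
  · subst hn
    simp [restricted]
  · rw [Finset.card_eq_zero, restricted, filter_eq_empty_iff]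
    intro P _ hP
    obtain ⟨i, hi⟩ := Multiset.exists_mem_of_ne_zero fun (h0 : P.parts = 0) =>
      hn (by rw [← P.parts_sum, h0, Multiset.sum_zero])
    exact List.not_mem_nil (hP i hi)

theorem card_filter_mem_restricted {n a : ℕ} {s : ℕ → Prop} [DecidablePred s]
    (ha1 : 1 ≤ a) (ha : a ≤ n) (hs : s a) :
    #((restricted n s).filter (a ∈ ·.parts)) = #(restricted (n - a) s) := by
  refine card_bij' (fun P hP => partitionWithPartEquiv ha1 ha ⟨P, (mem_filter.1 hP).2⟩)
    (fun Q _ => ((partitionWithPartEquiv ha1 ha).symm Q).1) ?_ ?_ ?_ ?_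
  · intro P hP
    simp only [restricted, mem_filter, mem_univ, true_and, partitionWithPartEquiv_apply_parts]
      at hP ⊢
    exact fun i hi => hP.1 i (Multiset.mem_of_mem_erase hi)
  · intro Q hQ
    simp only [restricted, mem_filter, mem_univ, true_and, partitionWithPartEquiv_symm_apply_parts,
      Multiset.mem_cons, true_or, and_true] at hQ ⊢
    exact fun i hi => hi.elim (· ▸ hs) (hQ i)
  · intro P _
    simp
  · intro Q _
    simp

theorem card_restricted_mem_cons {p : ℕ} {ps : List ℕ} (hp : 0 < p) (hps : p ∉ ps) (n : ℕ) :
    #(restricted n (· ∈ p :: ps)) =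
      #(restricted n (· ∈ ps)) + if p ≤ n then #(restricted (n - p) (· ∈ p :: ps)) else 0 := by
  rw [← card_filter_add_card_filter_not (fun P : n.Partition => p ∈ P.parts), add_comm]
  congr 1
  · congr 1
    ext P
    simp only [restricted, mem_filter, mem_univ, true_and, List.mem_cons]
    constructor
    · exact fun ⟨hP, hpP⟩ i hi => (hP i hi).resolve_left fun h => hpP (h ▸ hi)
    · exact fun hP => ⟨fun i hi => Or.inr (hP i hi), fun hpP => hps (hP p hpP)⟩
  · split_ifs with hpn
    · exact card_filter_mem_restricted hp hpn List.mem_cons_self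
    · rw [Finset.card_eq_zero, filter_eq_empty_iff]
      exact fun P _ hpP => hpn (le_of_mem_parts hpP)

end Nat.Partition

open Finset Nat.Partition

/-- Bit `j` of a natural number stands for the coefficient of `q^j` of a power series over `𝔽₂`;
this multiplies `a` by `1 / (1 - q^p) = 1 + q^p + q^(2p) + ⋯`, correctly up to `q^N`. -/
def geomMulBits (N p a : ℕ) : ℕ := (fun b => a ^^^ b <<< p)^[N / p] a

theorem testBit_geomMulBits {N p a : ℕ} {T S : ℕ → ℕ} (hp : 0 < p)
    (hS : ∀ j, S j = T j + if p ≤ j then S (j - p) else 0)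
    (ha : ∀ j ≤ N, a.testBit j = (T j).bodd) {j : ℕ} (hj : j ≤ N) :
    (geomMulBits N p a).testBit j = (S j).bodd := by
  suffices h : ∀ k, ∀ j ≤ N, j < (k + 1) * p →
      ((fun b => a ^^^ b <<< p)^[k] a).testBit j = (S j).bodd from
    h _ j hj (by rw [add_mul, one_mul]; exact (Nat.lt_div_mul_add hp).trans_le' (by omega))
  intro k
  induction k with
  | zero =>
    intro j hjN hjp
    rw [Function.iterate_zero_apply, ha j hjN, hS j, if_neg (by omega), add_zero]
  | succ k ih =>
    intro j hjN hjp
    rw [Function.iterate_succ_apply', Nat.testBit_xor, Nat.testBit_shiftLeft, ha j hjN, hS j]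
    split_ifs with hpj
    · have hjp' : j < (k + 1) * p + p := by rwa [add_mul _ 1, one_mul] at hjp
      rw [ih (j - p) (by omega) (by omega), Nat.bodd_add]
      simp [hpj]
    · simp [hpj]

def parityTable (L : List ℕ) (N : ℕ) : ℕ := L.foldr (geomMulBits N) 1

theorem testBit_parityTable {L : List ℕ} (hL : ∀ p ∈ L, 0 < p) (hnd : L.Nodup) {N j : ℕ}
    (hj : j ≤ N) : (parityTable L N).testBit j = (#(restricted j (· ∈ L))).bodd := by
  induction L generalizing j with
  | nil =>
    rw [card_restricted_mem_nil]
    rcases j with _ | j <;> simp [parityTable, Nat.testBit_succ]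
  | cons p ps ih =>
    have hp := hL p List.mem_cons_self
    exact testBit_geomMulBits hp (card_restricted_mem_cons hp (List.nodup_cons.1 hnd).1)
      (fun i hi => ih (fun q hq => hL q (List.mem_cons_of_mem p hq)) (List.nodup_cons.1 hnd).2 hi)
      hj

theorem p52_eq_card_restricted (n : ℕ) :
    p52 n = #(restricted n fun i => i % 5 = 2 ∨ i % 5 = 3) := by
  rw [p52, Nat.card_eq_fintype_card, Fintype.card_subtype]
  rfl

def parts52 : List ℕ := (List.range 588).filter fun i => i % 5 = 2 ∨ i % 5 = 3

theorem bodd_p52 {n : ℕ} (hn : n ≤ 587) : (p52 n).bodd = (parityTable parts52 587).testBit n := by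
  have hpos : ∀ p ∈ parts52, 0 < p := by
    intro p hp
    simp only [parts52, List.mem_filter, decide_eq_true_eq] at hp
    omega
  rw [testBit_parityTable hpos (List.nodup_range.filter _) hn, p52_eq_card_restricted]
  congr 2
  refine restricted_congr fun i _ hi => ?_
  simp only [parts52, List.mem_filter, List.mem_range, decide_eq_true_eq]
  omega

/-- **Example 4 (mod 2 discussion for `p_{5,2}`).** If `p_{5,2}(98n+t)` is even for all
`n ≥ 0`, then `t` is one of the eleven listed residues mod 98. -/
theorem stmt14 (t : ℕ) (ht : t < 98)
    (h : ∀ n : ℕ, 2 ∣ p52 (98 * n + t)) :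
    t ∈ ({6, 13, 20, 27, 34, 48, 55, 62, 76, 90, 97} : Finset ℕ) := by
  have hcert : ∀ t < 98, (∀ n < 6, (parityTable parts52 587).testBit (98 * n + t) = false) →
      t ∈ ({6, 13, 20, 27, 34, 48, 55, 62, 76, 90, 97} : Finset ℕ) := by
    set_option maxRecDepth 10000 in decide
  refine hcert t ht fun n hn => ?_
  rw [← bodd_p52 (by omega)]
  simpa [Nat.mod_two_of_bodd, Nat.dvd_iff_mod_eq_zero] using h n
end
end

section
/- The rational number 24N·P(r) is an integer; moreover, if in addition r_{δ,g} ∈ ℤ for all (δ,g), then 12N·P(r) is an integer. -/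
open scoped BigOperators

noncomputable section

open Finset

lemma six_mul_sq_mul_B2_div {g δ : ℕ} (hg : g < δ) :
    6 * (δ : ℚ) ^ 2 * B2 (g / δ) = ((6 * g ^ 2 - 6 * δ * g + δ ^ 2 : ℤ) : ℚ) := by
  have hδ : (0 : ℚ) < δ := by exact_mod_cast (Nat.zero_le g).trans_lt hg
  have hfract : Int.fract ((g : ℚ) / δ) = g / δ :=
    Int.fract_eq_self.mpr ⟨by positivity, (div_lt_one hδ).mpr (by exact_mod_cast hg)⟩
  rw [B2, hfract]
  push_cast
  field_simp

lemma twelve_mul_mul_Pr (N : ℕ) (r : ℕ → ℕ → ℚ) :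
    12 * (N : ℚ) * Pr N r = ∑ δ ∈ N.divisors, ∑ g ∈ range δ,
      ((N / δ : ℕ) : ℚ) * r δ g * ((6 * g ^ 2 - 6 * δ * g + δ ^ 2 : ℤ) : ℚ) := by
  rw [Pr, ← mul_assoc, show (12 : ℚ) * N * (1 / 2) = 6 * N by ring, mul_sum]
  refine sum_congr rfl fun δ hδ => ?_
  rw [mul_sum]
  refine sum_congr rfl fun g hg => ?_
  have hN : ((N / δ : ℕ) : ℚ) * δ = N := by
    exact_mod_cast Nat.div_mul_cancel (Nat.dvd_of_mem_divisors hδ)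
  rw [← six_mul_sq_mul_B2_div (mem_range.mp hg), ← hN]
  ring

lemma exists_int_mul_twelve_mul_mul_Pr (N : ℕ) (r : ℕ → ℕ → ℚ) (c : ℤ)
    (hr : ∀ δ g, ∃ z : ℤ, c * r δ g = z) : ∃ z : ℤ, c * (12 * (N : ℚ) * Pr N r) = z := by
  choose a ha using hr
  refine ⟨∑ δ ∈ N.divisors, ∑ g ∈ range δ,
    (N / δ : ℕ) * a δ g * (6 * g ^ 2 - 6 * δ * g + δ ^ 2), ?_⟩
  rw [twelve_mul_mul_Pr, mul_sum]
  simp only [Int.cast_sum, Int.cast_mul, Int.cast_natCast]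
  refine sum_congr rfl fun δ _ => ?_
  rw [mul_sum]
  refine sum_congr rfl fun g _ => ?_
  rw [← ha]
  ring

theorem stmt15_general (N : ℕ) (r : ℕ → ℕ → ℚ)
    (hr2 : ∀ δ g, ∃ z : ℤ, 2 * r δ g = (z : ℚ)) :
    (∃ z : ℤ, 24 * (N : ℚ) * Pr N r = (z : ℚ)) ∧
      ((∀ δ g, ∃ z : ℤ, r δ g = (z : ℚ)) → ∃ z : ℤ, 12 * (N : ℚ) * Pr N r = (z : ℚ)) := by
  refine ⟨?_, fun hr => ?_⟩
  · obtain ⟨z, hz⟩ := exists_int_mul_twelve_mul_mul_Pr N r 2 (by exact_mod_cast hr2)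
    exact ⟨z, by rw [← hz]; push_cast; ring⟩
  · obtain ⟨z, hz⟩ := exists_int_mul_twelve_mul_mul_Pr N r 1 (by simpa using hr)
    exact ⟨z, by rw [← hz]; push_cast; ring⟩

/-- The denominator of `P(r)` divides `24N` (and even `12N` if all `r_{δ,g}` are integers). -/
theorem stmt15 (N : ℕ) (hN : 0 < N) (r : ℕ → ℕ → ℚ)
    (hr2 : ∀ δ g, ∃ z : ℤ, 2 * r δ g = (z : ℚ))
    (hrZ : ∀ δ g, g ≠ 0 → 2 * g ≠ δ → ∃ z : ℤ, r δ g = (z : ℚ)) :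
    (∃ z : ℤ, 24 * (N : ℚ) * Pr N r = (z : ℚ)) ∧
      ((∀ δ g, ∃ z : ℤ, r δ g = (z : ℚ)) → ∃ z : ℤ, 12 * (N : ℚ) * Pr N r = (z : ℚ)) :=
  stmt15_general N r hr2
end
end
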